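/- arXiv:1908.10583 — 2 statements merged into one kernel-verified Lean document; each statement's English description precedes it below -/
import Mathlib

section
/- In the FORA estimator setting, suppose ε ∈ (0,1), 0 < p_f' ≤ 1, δ > 0, x ≥ 1 is an integer, π ≥ 2^{x+1}·δ, and that the number of walks is set so that ω = 4·r_sum·(2 + ε/3)·log(2/p_f') / (ε²·δ). Then P[π̂ ≤ (1 + ε)·δ] ≤ (p_f')² / 2^{x+1}. -/
open MeasureTheory ProbabilityTheory Finset

lemma fora_exp_neg_half_le : Real.exp (-(1/2)) ≤ 5/8 := by
  have h2 : Real.exp (1/2) * Real.exp (1/2) = Real.exp 1 := by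
    rw [← Real.exp_add]; norm_num
  have h1 := Real.exp_one_gt_d9
  have h3 : (8/5:ℝ) ≤ Real.exp (1/2) := by nlinarith [Real.exp_pos (1/2:ℝ)]
  rw [Real.exp_neg]
  rw [inv_le_comm₀ (Real.exp_pos _) (by norm_num)]
  linarith

lemma fora_exp_lin_bound {c : ℝ} (h0 : 0 ≤ c) (h1 : c ≤ 1) :
    Real.exp (-(c/2)) ≤ 1 - 3/8 * c := by
  have hcvx := convexOn_exp.2 (Set.mem_univ (0:ℝ)) (Set.mem_univ (-(1/2):ℝ))
    (by linarith : (0:ℝ) ≤ 1 - c) h0 (by ring)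
  simp only [smul_eq_mul, mul_zero, zero_add, Real.exp_zero, mul_one] at hcvx
  have heq : c * (-(1/2)) = -(c/2) := by ring
  rw [heq] at hcvx
  nlinarith [fora_exp_neg_half_le]

set_option maxHeartbeats 1000000 in
/-- **Lemma 5.3 (lem:topk-delta), third case (key probabilistic step).**
In the FORA estimator setting, with `π ≥ 2^{x+1}·δ` for an integer `x ≥ 1`
and `ω = 4·r_sum·(2 + ε/3)·log(2/p_f') / (ε²·δ)`:
`P[π̂ ≤ (1 + ε)·δ] ≤ (p_f')² / 2^{x+1}`. -/
theorem fora_topk_delta_undershoot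
    {Ω : Type*} [MeasurableSpace Ω] (μ : Measure Ω) [IsProbabilityMeasure μ]
    (N : ℕ) (hN : 0 < N)
    (Y : Fin N → Ω → ℝ) (p : Fin N → ℝ)
    (hmeas : ∀ j, Measurable (Y j))
    (hindep : iIndepFun Y μ)
    (hval : ∀ j, ∀ᵐ x ∂μ, Y j x = 0 ∨ Y j x = 1)
    (hp : ∀ j, μ {x | Y j x = 1} = ENNReal.ofReal (p j))
    (b : Fin N → ℝ) (hb : ∀ j, 0 < b j ∧ b j ≤ 1)
    (rsum w : ℝ) (hrsum : 0 < rsum) (hw : 0 < w)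
    (res : ℝ) (hres : 0 ≤ res)
    (piHat : Ω → ℝ) (hpiHat : piHat = fun y => res + (rsum / w) * ∑ j, b j * Y j y)
    (pi : ℝ) (hpi : pi = res + (rsum / w) * ∑ j, b j * p j)
    (ε δ pf : ℝ) (x : ℕ) (hε0 : 0 < ε) (hε1 : ε < 1)
    (hpf0 : 0 < pf) (hpf1 : pf ≤ 1)
    (hδ : 0 < δ) (hx : 1 ≤ x)
    (hpilarge : (2 : ℝ) ^ (x + 1) * δ ≤ pi)
    (hwdef : w = 4 * rsum * (2 + ε / 3) * Real.log (2 / pf) / (ε ^ 2 * δ)) :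
    μ {y | piHat y ≤ (1 + ε) * δ} ≤
      ENNReal.ofReal (pf ^ 2 / 2 ^ (x + 1)) := by
  by_cases hres2 : res ≤ (1 + ε) * δ
  swap
  · -- the event is a.s. impossible
    have hZ : μ {y | piHat y ≤ (1 + ε) * δ} = 0 := by
      have hae : ∀ᵐ y ∂μ, y ∉ {y | piHat y ≤ (1 + ε) * δ} := by
        have hall : ∀ᵐ y ∂μ, ∀ j, Y j y = 0 ∨ Y j y = 1 := ae_all_iff.mpr hval
        filter_upwards [hall] with y hy
        simp only [Set.mem_setOf_eq, hpiHat, not_le]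
        have hsum : 0 ≤ ∑ j, b j * Y j y := Finset.sum_nonneg fun j _ => by
          rcases hy j with h | h <;> simp [h]
          exact (hb j).1.le
        have hnn : 0 ≤ rsum / w * ∑ j, b j * Y j y :=
          mul_nonneg (div_pos hrsum hw).le hsum
        linarith [lt_of_not_ge hres2]
      exact measure_eq_zero_iff_ae_notMem.mpr hae
    rw [hZ]; exact zero_le
  -- main case
  have hcpos : 0 < w / rsum := div_pos hw hrsum
  set c := w / rsum with hc
  set q : Fin N → ℝ := fun j => max (p j) 0 with hqdef
  have hq0 : ∀ j, 0 ≤ q j := fun j => le_max_right _ _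
  have hofq : ∀ j, ENNReal.ofReal (p j) = ENNReal.ofReal (q j) := by
    intro j
    rcases le_or_gt 0 (p j) with h | h
    · simp [hqdef, max_eq_left h]
    · rw [ENNReal.ofReal_eq_zero.mpr h.le]
      simp [hqdef, max_eq_right h.le]
  have hqp : ∀ j, p j ≤ q j := fun j => le_max_left _ _
  set X : Fin N → Ω → ℝ := fun j ω => b j * Y j ω with hXdef
  have hXmeas : ∀ j, Measurable (X j) := fun j => (hmeas j).const_mul _
  have hXindep : iIndepFun X μ :=
    hindep.comp (fun j (v : ℝ) => b j * v) (fun j => measurable_const_mul _)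
  set m := ∑ j, b j * q j with hm
  set T := ((1 + ε) * δ - res) * c with hT
  -- integrability and mean of each Y j
  have hYint : ∀ j, Integrable (Y j) μ := by
    intro j
    refine Integrable.mono' (integrable_const 1) (hmeas j).aestronglyMeasurable ?_
    filter_upwards [hval j] with y hy
    rcases hy with h | h <;> simp [h]
  have hEY : ∀ j, ∫ y, Y j y ∂μ = q j := by
    intro j
    have hms : MeasurableSet {y | Y j y = 1} := (hmeas j) (measurableSet_singleton 1)
    have hae : Y j =ᵐ[μ] Set.indicator {y | Y j y = 1} (fun _ => (1:ℝ)) := by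
      filter_upwards [hval j] with y hy
      rcases hy with h | h
      · simp [Set.indicator, h]
      · simp [Set.indicator, h]
    rw [integral_congr_ae hae, integral_indicator_const _ hms, measureReal_def, hp j, hofq j,
      ENNReal.toReal_ofReal (hq0 j), smul_eq_mul, mul_one]
  -- pointwise rewriting of exp(-(1/2) X j)
  have hcongr : ∀ j, (fun y => Real.exp (-(1/2) * X j y)) =ᵐ[μ]
      fun y => 1 + (Real.exp (-(b j / 2)) - 1) * Y j y := by
    intro j
    filter_upwards [hval j] with y hy
    rcases hy with h | h
    · simp [hXdef, h]
    · simp only [hXdef, h, mul_one]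
      rw [show -(1/2) * b j = -(b j / 2) by ring]
      ring
  have hint : ∀ j, Integrable (fun y => Real.exp (-(1/2) * X j y)) μ := by
    intro j
    exact Integrable.congr ((integrable_const 1).add ((hYint j).const_mul _)) (hcongr j).symm
  have hmgf_eq : ∀ j, mgf (X j) μ (-(1/2)) = 1 + (Real.exp (-(b j / 2)) - 1) * q j := by
    intro j
    have h0 : mgf (X j) μ (-(1/2)) = ∫ y, Real.exp (-(1/2) * X j y) ∂μ := rfl
    rw [h0, integral_congr_ae (hcongr j),
      integral_add (integrable_const 1) ((hYint j).const_mul _),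
      integral_const, integral_const_mul, hEY j]
    simp
  have hq1 : ∀ j, q j ≤ 1 := by
    intro j
    have h := hp j
    rw [hofq j] at h
    have h1 : ENNReal.ofReal (q j) ≤ 1 := h ▸ prob_le_one
    rwa [ENNReal.ofReal_le_one] at h1
  have hmgf_le : ∀ j, mgf (X j) μ (-(1/2)) ≤ Real.exp (-(3/8) * (b j * q j)) := by
    intro j
    rw [hmgf_eq j]
    have h1 : Real.exp (-(b j / 2)) - 1 ≤ -(3/8 * b j) := by
      have := fora_exp_lin_bound (hb j).1.le (hb j).2; linarith
    have h2 : (Real.exp (-(b j / 2)) - 1) * q j ≤ -(3/8 * b j) * q j :=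
      mul_le_mul_of_nonneg_right h1 (hq0 j)
    have h3 := Real.add_one_le_exp (-(3/8) * (b j * q j))
    nlinarith
  -- mgf of the sum
  have hS := hXindep.mgf_sum (t := -(1/2)) hXmeas Finset.univ
  have hprod : mgf (∑ j, X j) μ (-(1/2)) ≤ Real.exp (-(3/8) * m) := by
    rw [hS]
    calc ∏ j, mgf (X j) μ (-(1/2)) ≤ ∏ j, Real.exp (-(3/8) * (b j * q j)) :=
          Finset.prod_le_prod (fun j _ => mgf_nonneg) (fun j _ => hmgf_le j)
      _ = Real.exp (∑ j, -(3/8) * (b j * q j)) := by rw [Real.exp_sum]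
      _ = Real.exp (-(3/8) * m) := by rw [← Finset.mul_sum, hm]
  have hintS : Integrable (fun y => Real.exp (-(1/2) * (∑ j, X j) y)) μ :=
    hXindep.integrable_exp_mul_sum hXmeas (fun j _ => hint j)
  have hch := measure_le_le_exp_mul_mgf (μ := μ) (X := ∑ j, X j) (t := -(1/2)) T
    (by norm_num) hintS
  -- set identification
  have hsetq : {y | piHat y ≤ (1 + ε) * δ} = {ω | (∑ j, X j) ω ≤ T} := by
    ext y
    simp only [Set.mem_setOf_eq, hpiHat, hXdef, Finset.sum_apply]
    have h1 : res + rsum / w * ∑ j, b j * Y j y ≤ (1 + ε) * δ ↔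
        rsum / w * ∑ j, b j * Y j y ≤ (1 + ε) * δ - res := by
      constructor <;> intro <;> linarith
    rw [h1, div_mul_eq_mul_div, div_le_iff₀ hw, hT, hc, ← mul_div_assoc,
      le_div_iff₀ hrsum]
    constructor <;> intro h2 <;> nlinarith
  -- lower bounds on m
  have hmean : (pi - res) * c = ∑ j, b j * p j := by
    rw [hpi, hc]
    field_simp
    ring
  have hm_ge : (pi - res) * c ≤ m := by
    rw [hmean, hm]
    exact Finset.sum_le_sum fun j _ => mul_le_mul_of_nonneg_left (hqp j) (hb j).1.le
  have hMm : ((2:ℝ) ^ (x + 1) * δ - res) * c ≤ m :=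
    le_trans (mul_le_mul_of_nonneg_right (sub_le_sub_right hpilarge res) hcpos.le) hm_ge
  have hpow4 : (4:ℝ) ≤ 2 ^ (x + 1) := by
    have h4 : (2:ℝ) ^ 2 ≤ 2 ^ (x + 1) :=
      pow_le_pow_right₀ (by norm_num) (by omega)
    norm_num at h4; linarith
  have hm0 : 0 ≤ m := Finset.sum_nonneg fun j _ => mul_nonneg (hb j).1.le (hq0 j)
  have hTm : T ≤ m / 2 := by
    have hmul : ((1 + ε) * δ - res) ≤ ((2:ℝ) ^ (x + 1) * δ - res) / 2 := by
      nlinarith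
    calc T ≤ (((2:ℝ) ^ (x + 1) * δ - res) / 2) * c :=
          mul_le_mul_of_nonneg_right hmul hcpos.le
      _ = (((2:ℝ) ^ (x + 1) * δ - res) * c) / 2 := by ring
      _ ≤ m / 2 := by linarith [hMm]
  -- numeric lower bound on m
  set L := Real.log (2 / pf) with hLdef0
  have h2pf : (2:ℝ) ≤ 2 / pf := by
    rw [le_div_iff₀ hpf0]; nlinarith
  have hL : Real.log 2 ≤ L := Real.log_le_log (by norm_num) h2pf
  have hlog2 : 0 < Real.log 2 := Real.log_pos (by norm_num)
  have hLpos : 0 < L := lt_of_lt_of_le hlog2 hL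
  have hLdef : L = Real.log 2 - Real.log pf := Real.log_div (by norm_num) hpf0.ne'
  have hδc : δ * c = 4 * (2 + ε / 3) * L / ε ^ 2 := by
    rw [hc, hwdef]
    field_simp
  have hxx : (1:ℝ) ≤ (x:ℝ) := by exact_mod_cast hx
  have hP : (x:ℝ) + 3 ≤ 2 ^ (x + 1) := by
    have hn : x + 3 ≤ 2 ^ (x + 1) := by
      have := Nat.lt_two_pow_self (n := x)
      have h2 : 2 ^ (x + 1) = 2 * 2 ^ x := by ring
      omega
    exact_mod_cast hn
  have hεsq : 0 < ε ^ 2 := by positivity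
  have hmlb : ((2:ℝ) ^ (x + 1) - 1 - ε) * (δ * c) ≤ m := by
    have h5 : ((2:ℝ) ^ (x + 1) - 1 - ε) * δ ≤ 2 ^ (x + 1) * δ - res := by nlinarith
    calc ((2:ℝ) ^ (x + 1) - 1 - ε) * (δ * c) = (((2:ℝ) ^ (x + 1) - 1 - ε) * δ) * c := by ring
      _ ≤ ((2:ℝ) ^ (x + 1) * δ - res) * c := mul_le_mul_of_nonneg_right h5 hcpos.le
      _ ≤ m := hMm
  have hm8 : 8 * (((x:ℝ) + 1) * L) ≤ m := by
    refine le_trans ?_ hmlb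
    rw [hδc, show ((2:ℝ) ^ (x + 1) - 1 - ε) * (4 * (2 + ε / 3) * L / ε ^ 2) =
      (((2:ℝ) ^ (x + 1) - 1 - ε) * (4 * (2 + ε / 3) * L)) / ε ^ 2 by ring,
      le_div_iff₀ hεsq]
    nlinarith [mul_pos hLpos hεsq, mul_nonneg (mul_nonneg hLpos.le hε0.le) hε0.le,
      mul_nonneg hLpos.le (sub_nonneg.mpr hε1.le),
      mul_nonneg (mul_nonneg hLpos.le hε0.le) (sub_nonneg.mpr hε1.le),
      mul_le_mul_of_nonneg_right hP hLpos.le]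
  have hfinal : -(m / 8) ≤ Real.log (pf ^ 2 / 2 ^ (x + 1)) := by
    rw [Real.log_div (by positivity) (by positivity), Real.log_pow, Real.log_pow]
    have hlogpf : Real.log pf = Real.log 2 - L := by rw [hLdef]; ring
    rw [hlogpf]
    have hle : ((x:ℝ) - 1) * Real.log 2 ≤ ((x:ℝ) - 1) * L :=
      mul_le_mul_of_nonneg_left hL (by linarith)
    push_cast
    nlinarith
  -- conclusion
  have hmain : (μ {y | piHat y ≤ (1 + ε) * δ}).toReal ≤ pf ^ 2 / 2 ^ (x + 1) := by
    rw [hsetq]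
    calc (μ {ω | (∑ j, X j) ω ≤ T}).toReal
        ≤ Real.exp (-(-(1/2)) * T) * mgf (∑ j, X j) μ (-(1/2)) := hch
      _ ≤ Real.exp (-(-(1/2)) * T) * Real.exp (-(3/8) * m) :=
          mul_le_mul_of_nonneg_left hprod (Real.exp_pos _).le
      _ = Real.exp ((1/2) * T - (3/8) * m) := by rw [← Real.exp_add]; congr 1; ring
      _ ≤ Real.exp (-(m / 8)) := Real.exp_le_exp.mpr (by linarith)
      _ ≤ pf ^ 2 / 2 ^ (x + 1) := by
          rw [← Real.exp_log (show (0:ℝ) < pf ^ 2 / 2 ^ (x + 1) by positivity)]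
          exact Real.exp_le_exp.mpr hfinal
  rw [← ENNReal.ofReal_toReal (measure_ne_top μ _)]
  exact ENNReal.ofReal_le_ofReal hmain
end

section
/- Let V be a finite set, α ∈ (0,1), and for each v ∈ V let N(v) be a nonempty finite subset of V (the out-neighbors of v), with d(v) = |N(v)|. Suppose π : V × V → ℝ satisfies the personalized PageRank recurrence π(v,t) = α·[v = t] + ((1 − α)/d(v))·Σ_{u ∈ N(v)} π(u,t) for all v, t ∈ V, where [v = t] is 1 if v = t and 0 otherwise. Let r, p : V → ℝ be arbitrary residue and reserve functions, fix w ∈ V, and define the result of one push operation at w by: p'(v) = p(v) + α·r(w) if v = w and p'(v) = p(v) otherwise; r'(v) = (if v = w then 0 else r(v)) + (if v ∈ N(w) then (1 − α)·r(w)/d(w) else 0). Then for every t ∈ V: p'(t) + Σ_{v ∈ V} r'(v)·π(v,t) = p(t) + Σ_{v ∈ V} r(v)·π(v,t). In particular, every push operation of the Forward Push algorithm preserves the invariant π(s,t) = π°(s,t) + Σ_{v ∈ V} r(s,v)·π(v,t). -/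
open Finset

/-- **Forward Push invariant (Equation 3), preservation under one push.**
If `π` satisfies the personalized-PageRank recurrence, then one push
operation at `w` (converting `α·r(w)` into reserve and spreading
`(1−α)·r(w)/d(w)` to each out-neighbor) preserves the quantity
`p(t) + ∑_v r(v)·π(v,t)` for every target `t`. -/
theorem forward_push_invariant
    {V : Type*} [Fintype V] [DecidableEq V]
    (α : ℝ) (hα0 : 0 < α) (hα1 : α < 1)
    (N : V → Finset V) (hN : ∀ v, (N v).Nonempty)
    (d : V → ℕ) (hd : ∀ v, d v = (N v).card)
    (π : V → V → ℝ)
    (hrec : ∀ v t, π v t =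
      α * (if v = t then 1 else 0) + ((1 - α) / (d v : ℝ)) * ∑ u ∈ N v, π u t)
    (r p : V → ℝ) (w : V)
    (p' r' : V → ℝ)
    (hp' : ∀ v, p' v = if v = w then p v + α * r w else p v)
    (hr' : ∀ v, r' v = (if v = w then 0 else r v) +
      (if v ∈ N w then (1 - α) * r w / (d w : ℝ) else 0)) :
    ∀ t, p' t + ∑ v, r' v * π v t = p t + ∑ v, r v * π v t := by
  intro t
  have hdw : (d w : ℝ) ≠ 0 := by
    rw [hd]
    exact_mod_cast Finset.card_ne_zero_of_mem (hN w).choose_spec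
  have key : ((1 - α) / (d w : ℝ)) * ∑ u ∈ N w, π u t
      = π w t - α * (if w = t then 1 else 0) := by
    linarith [hrec w t]
  have hw : ((1 - α) * r w / (d w : ℝ)) * ∑ u ∈ N w, π u t
      = r w * π w t - α * r w * (if w = t then 1 else 0) := by
    calc ((1 - α) * r w / (d w : ℝ)) * ∑ u ∈ N w, π u t
        = r w * (((1 - α) / (d w : ℝ)) * ∑ u ∈ N w, π u t) := by ring
      _ = r w * (π w t - α * (if w = t then 1 else 0)) := by rw [key]
      _ = _ := by ring
  have h1 : ∑ v, r' v * π v t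
      = (∑ v, r v * π v t) - r w * π w t
        + ((1 - α) * r w / (d w : ℝ)) * ∑ u ∈ N w, π u t := by
    simp only [hr', add_mul, Finset.sum_add_distrib, ite_mul, zero_mul]
    congr 1
    · have heq : ∀ x : V, (if x = w then 0 else r x * π x t)
          = r x * π x t - (if x = w then r w * π w t else 0) := by
        intro x; by_cases hx : x = w <;> simp [hx]
      rw [Finset.sum_congr rfl (fun x _ => heq x), Finset.sum_sub_distrib,
        Finset.sum_ite_eq' Finset.univ w]
      simp
    · rw [Finset.mul_sum, ← Finset.sum_filter]
      congr 1
      simp [Finset.filter_mem_eq_inter]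
  rw [h1, hw, hp']
  by_cases ht : t = w
  · subst ht; simp
  · simp [ht, Ne.symm ht]
end
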